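/- Fix σ > 0, ℓ > 0 and x, x' ∈ ℝ. For each L > max(|x|, |x'|), let κ_L(x, x') = ∑_{j=1}^∞ S(√λ_{j,L}) · φ_{j,L}(x) · φ_{j,L}(x'), where φ_{j,L}(x) = L^{-1/2} sin(π j (x+L)/(2L)), λ_{j,L} = (π j/(2L))², and S(ω) = σ² √(2πℓ²) exp(−ω² ℓ²/2). Then κ_L(x, x') converges, as L → ∞, to the exact covariance value κ(x − x') = σ² exp(−(x − x')²/(2ℓ²)). -/

import Mathlib

/-!
Poisson summation turns the Laplace eigen-expansion on `[-L, L]` with Dirichlet boundary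
conditions into the method of images:
`κ_L(x, x') = ∑ₙ κ(x - x' - 4Ln) - ∑ₙ κ(x + x' + 2L - 4Ln)`.
As `L → ∞` every image except the `n = 0` term of the first sum moves off to infinity, and
dominated convergence (with the summable Gaussian `n ↦ κ(n)` as bound) leaves `κ(x - x')`.
-/

open Real Filter Topology

section PoissonCos

open Complex

lemma summable_cexp_neg_quadratic {a : ℝ} (ha : 0 < a) (b : ℝ) :
    Summable fun n : ℤ => cexp (-π * a * n ^ 2 + 2 * π * (I * b) * n) :=
  ((summable_jacobiTheta₂_term_iff b (I * a)).2 (by simpa using ha)).congr fun n => by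
    rw [jacobiTheta₂_term]; congr 1; linear_combination (π * n ^ 2 * a : ℂ) * I_sq

lemma re_cexp_neg_quadratic (a b : ℝ) (n : ℤ) :
    (cexp (-π * a * n ^ 2 + 2 * π * (I * b) * n)).re =
      rexp (-π * a * n ^ 2) * Real.cos (2 * π * b * n) := by
  rw [show -π * a * n ^ 2 + 2 * π * (I * b) * n
      = ((-π * a * n ^ 2 : ℝ) : ℂ) + ((2 * π * b * n : ℝ) : ℂ) * I by push_cast; ring,
    Complex.exp_add, ← Complex.ofReal_exp, re_ofReal_mul, exp_ofReal_mul_I_re]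

lemma summable_exp_neg_mul_int_sq_mul_cos {a : ℝ} (ha : 0 < a) (b : ℝ) :
    Summable fun n : ℤ => rexp (-π * a * n ^ 2) * Real.cos (2 * π * b * n) :=
  (reCLM.summable (summable_cexp_neg_quadratic ha b)).congr (re_cexp_neg_quadratic a b)

theorem tsum_exp_neg_mul_int_sq_mul_cos {a : ℝ} (ha : 0 < a) (b : ℝ) :
    ∑' n : ℤ, rexp (-π * a * n ^ 2) * Real.cos (2 * π * b * n) =
      (√a)⁻¹ * ∑' n : ℤ, rexp (-π / a * (n - b) ^ 2) := by
  have h := congrArg re (tsum_exp_neg_quadratic (a := a) (by simpa using ha) (I * b))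
  have hprefactor : 1 / (a : ℂ) ^ (1 / 2 : ℂ) = ((√a)⁻¹ : ℝ) := by
    rw [Real.sqrt_eq_rpow, ← one_div, ofReal_div, ofReal_cpow ha.le]; push_cast; rfl
  have hterm (n : ℤ) :
      cexp (-π / a * (n + I * (I * b)) ^ 2) = (rexp (-π / a * (n - b) ^ 2) : ℝ) := by
    rw [ofReal_exp, ← mul_assoc, I_mul_I]; push_cast; ring_nf
  simpa only [re_tsum (summable_cexp_neg_quadratic ha b), re_cexp_neg_quadratic, hprefactor,
    hterm, ← ofReal_tsum, ← ofReal_mul, ofReal_re] using h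

end PoissonCos

noncomputable section

def expQuadCov (σ ℓ r : ℝ) : ℝ := σ ^ 2 * exp (-r ^ 2 / (2 * ℓ ^ 2))

def expQuadSpectralDensity (σ ℓ ω : ℝ) : ℝ :=
  σ ^ 2 * √(2 * π * ℓ ^ 2) * exp (-ω ^ 2 * ℓ ^ 2 / 2)

def laplaceEigenvalue (L j : ℝ) : ℝ := (π * j / (2 * L)) ^ 2

def laplaceEigenfunction (L j x : ℝ) : ℝ := (√L)⁻¹ * sin (π * j * (x + L) / (2 * L))

def reducedRankCov (σ ℓ L x x' : ℝ) : ℝ :=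
  ∑' j : ℕ+, expQuadSpectralDensity σ ℓ √(laplaceEigenvalue L j) *
    laplaceEigenfunction L j x * laplaceEigenfunction L j x'

end

section

variable (σ : ℝ) {ℓ : ℝ}

lemma expQuadCov_nonneg (r : ℝ) : 0 ≤ expQuadCov σ ℓ r := by
  unfold expQuadCov; positivity

lemma expQuadCov_le_of_sq_le {r s : ℝ} (h : r ^ 2 ≤ s ^ 2) :
    expQuadCov σ ℓ s ≤ expQuadCov σ ℓ r := by
  unfold expQuadCov; gcongr

lemma summable_expQuadCov_int (hℓ : ℓ ≠ 0) : Summable fun n : ℤ => expQuadCov σ ℓ n := by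
  have ha : 0 < 1 / (2 * π * ℓ ^ 2) := by positivity
  refine ((summable_exp_neg_mul_int_sq_mul_cos ha 0).mul_left (σ ^ 2)).congr fun n => ?_
  rw [expQuadCov, mul_zero, zero_mul, Real.cos_zero, mul_one]
  congr 2
  field_simp

lemma tendsto_expQuadCov_cocompact (hℓ : ℓ ≠ 0) :
    Tendsto (expQuadCov σ ℓ) (cocompact ℝ) (𝓝 0) := by
  have hsq : Tendsto (fun r : ℝ => r ^ 2 / (2 * ℓ ^ 2)) (cocompact ℝ) atTop := by
    simpa [Real.norm_eq_abs, sq_abs] using ((tendsto_pow_atTop two_ne_zero).comp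
      (tendsto_norm_cocompact_atTop (E := ℝ))).atTop_div_const
        (by positivity : (0 : ℝ) < 2 * ℓ ^ 2)
  have h := (tendsto_exp_atBot.comp (tendsto_neg_atTop_atBot.comp hsq)).const_mul (σ ^ 2)
  rw [mul_zero] at h
  exact h.congr fun r => by simp [expQuadCov, neg_div]

lemma expQuadSpectralDensity_abs (ω : ℝ) :
    expQuadSpectralDensity σ ℓ |ω| = expQuadSpectralDensity σ ℓ ω := by
  rw [expQuadSpectralDensity, expQuadSpectralDensity, sq_abs]

lemma expQuadSpectralDensity_neg (ω : ℝ) :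
    expQuadSpectralDensity σ ℓ (-ω) = expQuadSpectralDensity σ ℓ ω := by
  rw [← expQuadSpectralDensity_abs, abs_neg, expQuadSpectralDensity_abs]

lemma expQuadSpectralDensity_mul_cos_eq {L : ℝ} (hL : L ≠ 0) (c j : ℝ) :
    expQuadSpectralDensity σ ℓ (π * j / (2 * L)) * cos (π * j * c / (2 * L)) =
      σ ^ 2 * √(2 * π * ℓ ^ 2) *
        (exp (-π * (π * ℓ ^ 2 / (8 * L ^ 2)) * j ^ 2) * cos (2 * π * (c / (4 * L)) * j)) := by
  rw [expQuadSpectralDensity, mul_assoc]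
  congr 4 <;> field_simp <;> ring

/-- Poisson summation: the numbers `S(πj/(2L)) / (4L)` are the Fourier coefficients of the
`4L`-periodisation of `κ`. -/
theorem tsum_int_expQuadSpectralDensity_mul_cos (hℓ : ℓ ≠ 0) {L : ℝ} (hL : 0 < L) (c : ℝ) :
    ∑' j : ℤ, expQuadSpectralDensity σ ℓ (π * j / (2 * L)) * cos (π * j * c / (2 * L)) =
      4 * L * ∑' n : ℤ, expQuadCov σ ℓ (c - L * (4 * n)) := by
  have ha : 0 < π * ℓ ^ 2 / (8 * L ^ 2) := by positivity
  have hprefactor : √(2 * π * ℓ ^ 2) * (√(π * ℓ ^ 2 / (8 * L ^ 2)))⁻¹ = 4 * L := by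
    rw [← Real.sqrt_inv, ← Real.sqrt_mul (by positivity),
      show 2 * π * ℓ ^ 2 * (π * ℓ ^ 2 / (8 * L ^ 2))⁻¹ = (4 * L) ^ 2 by field_simp; ring,
      Real.sqrt_sq (by positivity)]
  have hexp (n : ℤ) : exp (-π / (π * ℓ ^ 2 / (8 * L ^ 2)) * (n - c / (4 * L)) ^ 2) =
      exp (-(c - L * (4 * n)) ^ 2 / (2 * ℓ ^ 2)) := by
    congr 1; field_simp; ring
  simp only [expQuadSpectralDensity_mul_cos_eq σ hL.ne', tsum_mul_left,
    tsum_exp_neg_mul_int_sq_mul_cos ha, hexp, expQuadCov]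
  linear_combination σ ^ 2 * (∑' n : ℤ, exp (-(c - L * (4 * n)) ^ 2 / (2 * ℓ ^ 2))) * hprefactor

lemma expQuadSpectralDensity_mul_laplaceEigenfunction_mul {L : ℝ} (hL : 0 < L) (j x x' : ℝ) :
    expQuadSpectralDensity σ ℓ √(laplaceEigenvalue L j) * laplaceEigenfunction L j x *
        laplaceEigenfunction L j x' =
      (expQuadSpectralDensity σ ℓ (π * j / (2 * L)) * cos (π * j * (x - x') / (2 * L)) -
        expQuadSpectralDensity σ ℓ (π * j / (2 * L)) * cos (π * j * (x + x' + 2 * L) / (2 * L)))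
        / (2 * L) := by
  have hsin (A B : ℝ) : cos (A - B) - cos (A + B) = 2 * sin A * sin B := by
    rw [cos_sub, cos_add]; ring
  rw [laplaceEigenvalue, Real.sqrt_sq_eq_abs, expQuadSpectralDensity_abs, laplaceEigenfunction,
    laplaceEigenfunction, ← mul_sub,
    show π * j * (x - x') / (2 * L) =
      π * j * (x + L) / (2 * L) - π * j * (x' + L) / (2 * L) by ring,
    show π * j * (x + x' + 2 * L) / (2 * L) =
      π * j * (x + L) / (2 * L) + π * j * (x' + L) / (2 * L) by ring, hsin]
  field_simp
  rw [Real.sq_sqrt hL.le]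
  ring

theorem reducedRankCov_eq_sub_images (hℓ : ℓ ≠ 0) {L : ℝ} (hL : 0 < L) (x x' : ℝ) :
    reducedRankCov σ ℓ L x x' =
      ∑' n : ℤ, expQuadCov σ ℓ (x - x' - L * (4 * n)) -
        ∑' n : ℤ, expQuadCov σ ℓ (x + x' - L * (4 * n - 2)) := by
  have hsum (c : ℝ) : Summable fun j : ℤ =>
      expQuadSpectralDensity σ ℓ (π * j / (2 * L)) * cos (π * j * c / (2 * L)) := by
    simp_rw [expQuadSpectralDensity_mul_cos_eq σ hL.ne']
    exact (summable_exp_neg_mul_int_sq_mul_cos (by positivity) _).mul_left _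
  set f : ℤ → ℝ := fun j =>
    expQuadSpectralDensity σ ℓ (π * j / (2 * L)) * cos (π * j * (x - x') / (2 * L)) -
      expQuadSpectralDensity σ ℓ (π * j / (2 * L)) * cos (π * j * (x + x' + 2 * L) / (2 * L))
  have hf_even : f.Even := fun j => by
    simp only [f, Int.cast_neg, mul_neg, neg_mul, neg_div, expQuadSpectralDensity_neg, cos_neg]
  have hf_zero : f 0 = 0 := by simp [f]
  calc reducedRankCov σ ℓ L x x' = ∑' j : ℕ+, f j / (2 * L) := tsum_congr fun j => by
        rw [expQuadSpectralDensity_mul_laplaceEigenfunction_mul σ hL]; rfl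
    _ = (∑' j : ℤ, f j) / (4 * L) := by
        rw [tsum_div_const,
          tsum_int_eq_zero_add_two_mul_tsum_pnat hf_even ((hsum _).sub (hsum _)), hf_zero]
        field_simp; ring
    _ = _ := by
        rw [(hsum _).tsum_sub (hsum _), tsum_int_expQuadSpectralDensity_mul_cos σ hℓ hL,
          tsum_int_expQuadSpectralDensity_mul_cos σ hℓ hL]
        field_simp
        congr 2
        funext n
        ring_nf

lemma sq_le_sq_sub_mul_int {c L : ℝ} (hL : |c| + 1 ≤ L) (k : ℤ) :
    (k : ℝ) ^ 2 ≤ (c - L * k) ^ 2 := by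
  rcases eq_or_ne k 0 with rfl | hk
  · simpa using sq_nonneg c
  have hk1 : (1 : ℝ) ≤ |(k : ℝ)| := by exact_mod_cast Int.one_le_abs hk
  have htri : |L * k| - |c| ≤ |c - L * k| := by
    rw [abs_sub_comm]; exact abs_sub_abs_le_abs_sub _ _
  rw [abs_mul, abs_of_nonneg (by linarith [abs_nonneg c])] at htri
  exact sq_le_sq.2 (by nlinarith [abs_nonneg c])

lemma tendsto_const_sub_mul_atTop_cocompact (c : ℝ) {k : ℝ} (hk : k ≠ 0) :
    Tendsto (fun L => c - L * k) atTop (cocompact ℝ) :=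
  (Homeomorph.subLeft c).isClosedEmbedding.tendsto_cocompact.comp
    ((tendsto_cocompact_mul_right₀ hk).mono_left atTop_le_cocompact)

theorem tendsto_tsum_expQuadCov_sub_mul (hℓ : ℓ ≠ 0) (c : ℝ) {k : ℤ → ℤ}
    (hk : ∀ n, |n| ≤ |k n|) :
    Tendsto (fun L => ∑' n, expQuadCov σ ℓ (c - L * k n)) atTop
      (𝓝 (∑' n, if k n = 0 then expQuadCov σ ℓ c else 0)) := by
  refine tendsto_tsum_of_dominated_convergence (summable_expQuadCov_int σ hℓ) (fun n => ?_) ?_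
  · split_ifs with h
    · simp [h]
    · exact (tendsto_expQuadCov_cocompact σ hℓ).comp
        (tendsto_const_sub_mul_atTop_cocompact c (Int.cast_ne_zero.2 h))
  · filter_upwards [eventually_ge_atTop (|c| + 1)] with L hL n
    rw [Real.norm_of_nonneg (expQuadCov_nonneg σ _)]
    refine expQuadCov_le_of_sq_le σ ((sq_le_sq.2 ?_).trans (sq_le_sq_sub_mul_int hL (k n)))
    exact_mod_cast hk n

end

theorem reduced_rank_covariance_tendsto_general (σ ℓ : ℝ) (hℓ : 0 < ℓ) (x x' : ℝ) :
    Filter.Tendsto (fun L : ℝ =>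
        ∑' j : ℕ+, (σ ^ 2 * Real.sqrt (2 * Real.pi * ℓ ^ 2) *
            Real.exp (-(Real.sqrt ((Real.pi * j / (2 * L)) ^ 2)) ^ 2 * ℓ ^ 2 / 2)) *
          ((Real.sqrt L)⁻¹ * Real.sin (Real.pi * j * (x + L) / (2 * L))) *
          ((Real.sqrt L)⁻¹ * Real.sin (Real.pi * j * (x' + L) / (2 * L))))
      Filter.atTop
      (nhds (σ ^ 2 * Real.exp (-((x - x') ^ 2) / (2 * ℓ ^ 2)))) := by
  change Tendsto (fun L => reducedRankCov σ ℓ L x x') atTop (𝓝 (expQuadCov σ ℓ (x - x')))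
  have h_direct : Tendsto (fun L => ∑' n : ℤ, expQuadCov σ ℓ (x - x' - L * (4 * n))) atTop
      (𝓝 (expQuadCov σ ℓ (x - x'))) := by
    have h := tendsto_tsum_expQuadCov_sub_mul σ hℓ.ne' (x - x') (k := fun n => 4 * n)
      fun n => by grind
    simpa [tsum_ite_eq] using h
  have h_reflected : Tendsto (fun L => ∑' n : ℤ, expQuadCov σ ℓ (x + x' - L * (4 * n - 2))) atTop
      (𝓝 0) := by
    have h := tendsto_tsum_expQuadCov_sub_mul σ hℓ.ne' (x + x') (k := fun n => 4 * n - 2)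
      fun n => by grind
    simpa [show ∀ n : ℤ, 4 * n - 2 ≠ 0 by omega] using h
  refine (sub_zero (expQuadCov σ ℓ (x - x')) ▸ h_direct.sub h_reflected).congr' ?_
  filter_upwards [eventually_gt_atTop 0] with L hL
  exact (reducedRankCov_eq_sub_images σ hℓ.ne' hL x x').symm

/-- Pointwise convergence of the reduced-rank covariance approximation: with
`φ_{j,L}(x) = L^{-1/2} sin(π j (x+L)/(2L))`, `λ_{j,L} = (π j/(2L))²` and
`S(ω) = σ²√(2πℓ²) exp(-ω²ℓ²/2)`, the series
`κ_L(x,x') = ∑_{j=1}^∞ S(√λ_{j,L}) φ_{j,L}(x) φ_{j,L}(x')` converges, as `L → ∞`, to the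
exact covariance `σ² exp(-(x-x')²/(2ℓ²))`. -/
theorem reduced_rank_covariance_tendsto (σ ℓ : ℝ) (hσ : 0 < σ) (hℓ : 0 < ℓ) (x x' : ℝ) :
    Filter.Tendsto (fun L : ℝ =>
        ∑' j : ℕ+, (σ ^ 2 * Real.sqrt (2 * Real.pi * ℓ ^ 2) *
            Real.exp (-(Real.sqrt ((Real.pi * j / (2 * L)) ^ 2)) ^ 2 * ℓ ^ 2 / 2)) *
          ((Real.sqrt L)⁻¹ * Real.sin (Real.pi * j * (x + L) / (2 * L))) *
          ((Real.sqrt L)⁻¹ * Real.sin (Real.pi * j * (x' + L) / (2 * L))))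
      Filter.atTop
      (nhds (σ ^ 2 * Real.exp (-((x - x') ^ 2) / (2 * ℓ ^ 2)))) :=
  reduced_rank_covariance_tendsto_general σ ℓ hℓ x x'
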